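/- arXiv:0807.3108 — 3 statements merged into one kernel-verified Lean document; each statement's English description precedes it below -/
import Mathlib

section
/- With F_t the Hartree flow defined by z_t = e^{−itA} z − i ∫₀ᵗ e^{−i(t−s)A} ∂_{z̄}Q(z_s) ds, for every polynomial b ∈ P_{p,q}(Z) and every z ∈ Z one has the Duhamel formula: b(F_t(z)) = b_t(z) + i ∫₀ᵗ {Q, b_{t−t₁}}(F_{t₁}(z)) dt₁, where b_t(z) := b(e^{−itA} z) and {·,·} is the Poisson bracket. -/
open MeasureTheory Filter Topology Complex

noncomputable section

/-- Wirtinger derivative `∂_r f` at `0` of a function `f : ℂ → ℂ`. -/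
def wderivZ (f : ℂ → ℂ) : ℂ :=
  (deriv (fun s : ℝ => f (s : ℂ)) 0 - Complex.I * deriv (fun s : ℝ => f ((s : ℂ) * Complex.I)) 0) / 2

/-- Conjugate Wirtinger derivative `∂̄_r f` at `0` of a function `f : ℂ → ℂ`. -/
def wderivZbar (f : ℂ → ℂ) : ℂ :=
  (deriv (fun s : ℝ => f (s : ℂ)) 0 + Complex.I * deriv (fun s : ℝ => f ((s : ℂ) * Complex.I)) 0) / 2

variable {Z : Type*} [NormedAddCommGroup Z] [InnerProductSpace ℂ Z] [CompleteSpace Z]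

/-- Holomorphic directional derivative `∂_z f(z)[u]`. -/
def dzDir (f : Z → ℂ) (u z : Z) : ℂ := wderivZ fun r => f (z + r • u)

/-- Antiholomorphic directional derivative `∂_{z̄} f(z)[u]`. -/
def dzbarDir (f : Z → ℂ) (u z : Z) : ℂ := wderivZbar fun r => f (z + r • u)

/-- `f ∈ P_{p,q}(Z)` with a (sesqui)multilinear kernel of constant `M`:
`f z = β(z,…,z ; z,…,z)` for a bounded map `β`, conjugate-linear in the `q` first
slots and linear in the `p` last slots, with `‖β‖ ≤ M`. -/
def HasPQRep (p q : ℕ) (f : Z → ℂ) (M : ℝ) : Prop :=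
  ∃ β : (Fin q → Z) → (Fin p → Z) → ℂ,
    (∀ x y i u v, β (Function.update x i (u + v)) y
        = β (Function.update x i u) y + β (Function.update x i v) y) ∧
    (∀ x y i (c : ℂ) u, β (Function.update x i (c • u)) y
        = (starRingEnd ℂ) c * β (Function.update x i u) y) ∧
    (∀ x y j u v, β x (Function.update y j (u + v))
        = β x (Function.update y j u) + β x (Function.update y j v)) ∧
    (∀ x y j (c : ℂ) u, β x (Function.update y j (c • u))
        = c * β x (Function.update y j u)) ∧
    (∀ x y, ‖β x y‖ ≤ M * (∏ i, ‖x i‖) * ∏ j, ‖y j‖) ∧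
    (∀ z, f z = β (fun _ => z) (fun _ => z))

/-- The kernel norm of a polynomial in `P_{p,q}(Z)`. -/
def pqNorm (p q : ℕ) (f : Z → ℂ) : ℝ := sInf {M | HasPQRep p q f M}

/-- First order Poisson bracket `{f,g} = ∂_z f · ∂_{z̄} g − ∂_z g · ∂_{z̄} f`,
the contraction being computed in a Hilbert basis. -/
def PB1 {ι : Type*} (e : HilbertBasis ι ℂ Z) (f g : Z → ℂ) (z : Z) : ℂ :=
  (∑' i, dzDir f (e i) z * dzbarDir g (e i) z) - ∑' i, dzDir g (e i) z * dzbarDir f (e i) z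

/-- Second order Poisson bracket `{f,g}^{(2)} = ∂_z² f · ∂_{z̄}² g − ∂_z² g · ∂_{z̄}² f`. -/
def PB2 {ι : Type*} (e : HilbertBasis ι ℂ Z) (f g : Z → ℂ) (z : Z) : ℂ :=
  (∑' (i : ι) (j : ι),
      dzDir (dzDir f (e i)) (e j) z * dzbarDir (dzbarDir g (e i)) (e j) z)
  - ∑' (i : ι) (j : ι),
      dzDir (dzDir g (e i)) (e j) z * dzbarDir (dzbarDir f (e i)) (e j) z

/-- Iterated first-order Poisson brackets
`C₀^{(m)}(t_m,…,t₁,t) = {Q_{t_m},{⋯,{Q_{t₁}, b_t}⋯}}` along the free evolution `U`. -/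
def Cm {ι : Type*} (e : HilbertBasis ι ℂ Z) (U : ℝ → Z → Z) (Q b : Z → ℂ) :
    (m : ℕ) → (Fin m → ℝ) → ℝ → Z → ℂ
  | 0, _, t => fun z => b (U t z)
  | m + 1, ts, t => PB1 e (fun z => Q (U (ts 0) z)) (Cm e U Q b m (fun i => ts i.succ) t)

/-- The ordered simplex `{0 ≤ t_m ≤ ⋯ ≤ t₁ ≤ t}`. -/
def simplexSet (m : ℕ) (t : ℝ) : Set (Fin m → ℝ) :=
  {ts | (∀ i, 0 ≤ ts i ∧ ts i ≤ t) ∧ ∀ i j, i ≤ j → ts j ≤ ts i}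

/-- A strongly continuous one-parameter group of unitary (linear, isometric) maps. -/
def IsUnitaryGroup (U : ℝ → Z → Z) : Prop :=
  U 0 = id ∧ (∀ s t, U (s + t) = U s ∘ U t) ∧ (∀ t z, ‖U t z‖ = ‖z‖) ∧
  (∀ t (z w : Z), U t (z + w) = U t z + U t w) ∧
  (∀ t (c : ℂ) (z : Z), U t (c • z) = c • U t z) ∧
  Continuous fun pt : ℝ × Z => U pt.1 pt.2

/-- `G` is the antiholomorphic gradient `∂_{z̄} f` of `f`. -/
def IsGradBar (f : Z → ℂ) (G : Z → Z) : Prop :=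
  ∀ z u, dzbarDir f u z = (inner ℂ u (G z) : ℂ)

/-- `F` is a continuous solution flow of the Hartree-type integral equation
`z_t = e^{−itA} z − i ∫₀ᵗ e^{−i(t−s)A} ∂_{z̄}Q(z_s) ds` (with `U t = e^{-itA}`, `G = ∂_{z̄}Q`). -/
def IsHartreeFlow (U : ℝ → Z → Z) (G : Z → Z) (F : ℝ → Z → Z) : Prop :=
  Continuous (fun pt : ℝ × Z => F pt.1 pt.2) ∧
  ∀ t z, F t z = U t z - Complex.I • ∫ s in (0:ℝ)..t, U (t - s) (G (F s z))

theorem updc_inj {ι κ W : Type*} [DecidableEq ι] [DecidableEq κ] {g : ι → κ}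
    (hg : Function.Injective g) (m : κ → W) (k : ι) (x : W) :
    (fun i => Function.update m (g k) x (g i)) = Function.update (fun i => m (g i)) k x := by
  funext i
  by_cases h : i = k
  · subst h; simp
  · rw [Function.update_of_ne (hg.ne h), Function.update_of_ne h]

theorem updc_ne {ι κ W : Type*} [DecidableEq κ] {g : ι → κ}
    (m : κ → W) (k' : κ) (x : W) (h : ∀ i, g i ≠ k') :
    (fun i => Function.update m k' x (g i)) = fun i => m (g i) := by
  funext i; rw [Function.update_of_ne (h i)]

/-- Auxiliary packaging of a `P_{p,q}` polynomial as a continuous `ℝ`-multilinear map. -/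
structure PQRep (p q : ℕ) (f : Z → ℂ) where
  B : ContinuousMultilinearMap ℝ (fun _ : Fin q ⊕ Fin p => Z) ℂ
  smul_inl : ∀ (m : Fin q ⊕ Fin p → Z) (i : Fin q) (c : ℂ) (u : Z),
    B (Function.update m (Sum.inl i) (c • u))
      = (starRingEnd ℂ) c * B (Function.update m (Sum.inl i) u)
  smul_inr : ∀ (m : Fin q ⊕ Fin p → Z) (j : Fin p) (c : ℂ) (u : Z),
    B (Function.update m (Sum.inr j) (c • u)) = c * B (Function.update m (Sum.inr j) u)
  eqf : ∀ z, f z = B (fun _ => z)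

theorem HasPQRep.toRep {p q : ℕ} {f : Z → ℂ} {M : ℝ} (h : HasPQRep p q f M) :
    Nonempty (PQRep p q f) := by
  classical
  obtain ⟨β, hadd1, hsmul1, hadd2, hsmul2, hbound, heq⟩ := h
  let L : MultilinearMap ℝ (fun _ : Fin q ⊕ Fin p => Z) ℂ :=
  { toFun := fun m => β (fun i => m (Sum.inl i)) (fun j => m (Sum.inr j))
    map_update_add' := by
      intro _ m k x y
      rcases k with i | j
      · rw [updc_inj Sum.inl_injective, updc_inj Sum.inl_injective,
          updc_inj Sum.inl_injective, updc_ne _ _ _ (fun j' => by simp),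
          updc_ne _ _ _ (fun j' => by simp), updc_ne _ _ _ (fun j' => by simp)]
        exact hadd1 _ _ i x y
      · rw [updc_inj Sum.inr_injective, updc_inj Sum.inr_injective,
          updc_inj Sum.inr_injective, updc_ne _ _ _ (fun i' => by simp),
          updc_ne _ _ _ (fun i' => by simp), updc_ne _ _ _ (fun i' => by simp)]
        exact hadd2 _ _ j x y
    map_update_smul' := by
      intro _ m k c x
      rcases k with i | j
      · rw [updc_inj Sum.inl_injective, updc_inj Sum.inl_injective,
          updc_ne _ _ _ (fun j' => by simp), updc_ne _ _ _ (fun j' => by simp),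
          show c • x = ((c : ℝ) : ℂ) • x from (Complex.coe_smul c x).symm, hsmul1]
        simp [Complex.real_smul]
      · rw [updc_inj Sum.inr_injective, updc_inj Sum.inr_injective,
          updc_ne _ _ _ (fun i' => by simp), updc_ne _ _ _ (fun i' => by simp),
          show c • x = ((c : ℝ) : ℂ) • x from (Complex.coe_smul c x).symm, hsmul2]
        simp [Complex.real_smul] }
  have hLb : ∀ m, ‖L m‖ ≤ M * ∏ i, ‖m i‖ := by
    intro m
    calc ‖L m‖ ≤ M * (∏ i, ‖m (Sum.inl i)‖) * ∏ j, ‖m (Sum.inr j)‖ := hbound _ _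
    _ = M * ∏ i, ‖m i‖ := by rw [Fintype.prod_sum_type]; ring
  refine ⟨⟨L.mkContinuous M hLb, ?_, ?_, ?_⟩⟩
  · intro m i c u
    show L _ = _ * L _
    simp only [L, MultilinearMap.coe_mk]
    rw [updc_inj Sum.inl_injective, updc_inj Sum.inl_injective,
      updc_ne _ _ _ (fun j' => by simp), updc_ne _ _ _ (fun j' => by simp)]
    exact hsmul1 _ _ i c u
  · intro m j c u
    show L _ = _ * L _
    simp only [L, MultilinearMap.coe_mk]
    rw [updc_inj Sum.inr_injective, updc_inj Sum.inr_injective,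
      updc_ne _ _ _ (fun i' => by simp), updc_ne _ _ _ (fun i' => by simp)]
    exact hsmul2 _ _ j c u
  · intro z
    exact heq z

namespace PQRep

variable {p q : ℕ} {f : Z → ℂ} (R : PQRep p q f)

def Dz (v w : Z) : ℂ := ∑ j : Fin p, R.B (Function.update (fun _ => w) (Sum.inr j) v)

def Dzbar (v w : Z) : ℂ := ∑ i : Fin q, R.B (Function.update (fun _ => w) (Sum.inl i) v)

theorem Dz_smul (c : ℂ) (v w : Z) : R.Dz (c • v) w = c * R.Dz v w := by
  simp [Dz, R.smul_inr, Finset.mul_sum]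

theorem Dzbar_smul (c : ℂ) (v w : Z) :
    R.Dzbar (c • v) w = (starRingEnd ℂ) c * R.Dzbar v w := by
  simp [Dzbar, R.smul_inl, Finset.mul_sum]

theorem hasDerivAt_comp {c : ℝ → Z} {v : Z} {t : ℝ} (hc : HasDerivAt c v t) :
    HasDerivAt (fun s => f (c s)) (R.Dz v (c t) + R.Dzbar v (c t)) t := by
  classical
  have h1 : HasDerivAt (fun s => (fun _ : Fin q ⊕ Fin p => c s)) (fun _ => v) t :=
    hasDerivAt_pi.2 fun _ => hc
  have h2 := (R.B.hasFDerivAt (fun _ => c t)).comp_hasDerivAt t h1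
  have h3 : (fun s => f (c s)) = (⇑R.B) ∘ (fun s => (fun _ : Fin q ⊕ Fin p => c s)) := by
    funext s; exact R.eqf (c s)
  rw [h3]
  refine h2.congr_deriv ?_
  rw [ContinuousMultilinearMap.linearDeriv_apply, Fintype.sum_sum_type]
  simp only [Dz, Dzbar]
  exact add_comm _ _

theorem continuous_Dz : Continuous fun pt : Z × Z => R.Dz pt.1 pt.2 := by
  classical
  refine continuous_finset_sum _ fun j _ => R.B.cont.comp (continuous_pi fun k => ?_)
  by_cases hk : k = Sum.inr j
  · simpa [Function.update_apply, hk] using continuous_fst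
  · simpa [Function.update_apply, hk] using continuous_snd

theorem continuous_Dzbar : Continuous fun pt : Z × Z => R.Dzbar pt.1 pt.2 := by
  classical
  refine continuous_finset_sum _ fun i _ => R.B.cont.comp (continuous_pi fun k => ?_)
  by_cases hk : k = Sum.inl i
  · simpa [Function.update_apply, hk] using continuous_fst
  · simpa [Function.update_apply, hk] using continuous_snd

end PQRep

namespace PQRep

variable {p q : ℕ} {f : Z → ℂ} (R : PQRep p q f)

theorem curve_hasDerivAt (w v : Z) : HasDerivAt (fun s : ℝ => w + s • v) v 0 := by
  simpa using ((hasDerivAt_id (0:ℝ)).smul_const v).const_add w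

theorem hasDerivAt_re (v w : Z) :
    HasDerivAt (fun s : ℝ => f (w + (s : ℂ) • v)) (R.Dz v w + R.Dzbar v w) 0 := by
  have h := R.hasDerivAt_comp (curve_hasDerivAt w v)
  simpa only [Complex.coe_smul, zero_smul, add_zero] using h

theorem hasDerivAt_im (v w : Z) :
    HasDerivAt (fun s : ℝ => f (w + ((s : ℂ) * Complex.I) • v))
      (R.Dz (Complex.I • v) w + R.Dzbar (Complex.I • v) w) 0 := by
  have h := R.hasDerivAt_comp (curve_hasDerivAt w (Complex.I • v))
  simpa only [mul_smul, Complex.coe_smul, zero_smul, add_zero] using h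

theorem dzDir_eq (v w : Z) : dzDir f v w = R.Dz v w := by
  have h1 := (R.hasDerivAt_re v w).deriv
  have h2 := (R.hasDerivAt_im v w).deriv
  simp only [dzDir, wderivZ]
  rw [h1, h2, R.Dz_smul, R.Dzbar_smul, Complex.conj_I]
  linear_combination ((R.Dzbar v w - R.Dz v w) / 2) * Complex.I_sq

theorem dzbarDir_eq (v w : Z) : dzbarDir f v w = R.Dzbar v w := by
  have h1 := (R.hasDerivAt_re v w).deriv
  have h2 := (R.hasDerivAt_im v w).deriv
  simp only [dzbarDir, wderivZbar]
  rw [h1, h2, R.Dz_smul, R.Dzbar_smul, Complex.conj_I]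
  linear_combination ((R.Dz v w - R.Dzbar v w) / 2) * Complex.I_sq

include R in
theorem dzDir_conj (hreal : ∀ z, (starRingEnd ℂ) (f z) = f z) (v w : Z) :
    dzDir f v w = (starRingEnd ℂ) (dzbarDir f v w) := by
  have hre := R.hasDerivAt_re v w
  have him := R.hasDerivAt_im v w
  have e2 : R.Dz (Complex.I • v) w + R.Dzbar (Complex.I • v) w
      = Complex.I * R.Dz v w + -Complex.I * R.Dzbar v w := by
    rw [R.Dz_smul, R.Dzbar_smul, Complex.conj_I]
  rw [e2] at him
  have hre' := hre.star
  have him' := him.star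
  have heq1 : (fun s : ℝ => star (f (w + (s : ℂ) • v))) = fun s : ℝ => f (w + (s : ℂ) • v) :=
    funext fun s => by rw [← starRingEnd_apply]; exact hreal _
  have heq2 : (fun s : ℝ => star (f (w + ((s : ℂ) * Complex.I) • v)))
      = fun s : ℝ => f (w + ((s : ℂ) * Complex.I) • v) :=
    funext fun s => by rw [← starRingEnd_apply]; exact hreal _
  rw [heq1] at hre'
  rw [heq2] at him'
  have h1 : star (R.Dz v w + R.Dzbar v w) = R.Dz v w + R.Dzbar v w := hre'.unique hre
  have h2 : star (Complex.I * R.Dz v w + -Complex.I * R.Dzbar v w)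
      = Complex.I * R.Dz v w + -Complex.I * R.Dzbar v w := him'.unique him
  rw [← starRingEnd_apply] at h1 h2
  simp only [map_add, map_mul, map_neg, Complex.conj_I, neg_neg, neg_mul] at h1 h2
  rw [R.dzDir_eq, R.dzbarDir_eq]
  linear_combination -h1 / 2 + Complex.I / 2 * h2 +
    (((starRingEnd ℂ) (R.Dz v w) - (starRingEnd ℂ) (R.Dzbar v w)
      + R.Dz v w - R.Dzbar v w) / 2) * Complex.I_sq

end PQRep

namespace PQRep

variable {p q : ℕ} {f : Z → ℂ} (R : PQRep p q f)

theorem norm_update_le {ι : Type*} [Fintype ι] [DecidableEq ι] (i : ι) (u z : Z) :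
    ‖Function.update (fun _ : ι => z) i u‖ ≤ max ‖u‖ ‖z‖ := by
  rw [pi_norm_le_iff_of_nonneg (le_max_iff.2 (Or.inl (norm_nonneg u)))]
  intro k
  by_cases hk : k = i
  · subst hk; simp
  · rw [Function.update_of_ne hk]; exact le_max_right _ _

theorem norm_update_sub_le {ι : Type*} [Fintype ι] [DecidableEq ι] (i : ι) (u z z' : Z) :
    ‖Function.update (fun _ : ι => z) i u - Function.update (fun _ : ι => z') i u‖
      ≤ ‖z - z'‖ := by
  rw [pi_norm_le_iff_of_nonneg (norm_nonneg _)]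
  intro k
  rw [Pi.sub_apply]
  by_cases hk : k = i
  · subst hk; simp
  · rw [Function.update_of_ne hk, Function.update_of_ne hk]

theorem prod_norm_update {ι : Type*} [Fintype ι] [DecidableEq ι] (i : ι) (u z : Z) :
    ∏ k : ι, ‖Function.update (fun _ : ι => z) i u k‖ = ‖u‖ * ‖z‖ ^ (Fintype.card ι - 1) := by
  have h : (fun k : ι => ‖Function.update (fun _ : ι => z) i u k‖)
      = Function.update (fun _ : ι => ‖z‖) i ‖u‖ := by
    funext k
    by_cases hk : k = i
    · subst hk; simp
    · rw [Function.update_of_ne hk, Function.update_of_ne hk]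
  rw [show (∏ k : ι, ‖Function.update (fun _ : ι => z) i u k‖)
      = ∏ k : ι, Function.update (fun _ : ι => ‖z‖) i ‖u‖ k from by rw [← h],
    Finset.prod_update_of_mem (Finset.mem_univ i), Finset.prod_const,
    Finset.card_sdiff_of_subset (Finset.subset_univ _), Finset.card_singleton, Finset.card_univ]

include R in
theorem Dzbar_sub_le (u z z' : Z) :
    ‖R.Dzbar u z - R.Dzbar u z'‖
      ≤ (q : ℝ) * (‖R.B‖ * (q + p) * max (max ‖u‖ ‖z‖) ‖z'‖ ^ (q + p - 1)) * ‖z - z'‖ := by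
  classical
  have hcard : Fintype.card (Fin q ⊕ Fin p) = q + p := by simp
  rw [Dzbar, Dzbar, ← Finset.sum_sub_distrib]
  calc ‖∑ i : Fin q, (R.B (Function.update (fun _ => z) (Sum.inl i) u)
        - R.B (Function.update (fun _ => z') (Sum.inl i) u))‖
      ≤ ∑ i : Fin q, ‖R.B (Function.update (fun _ => z) (Sum.inl i) u)
        - R.B (Function.update (fun _ => z') (Sum.inl i) u)‖ := norm_sum_le _ _
    _ ≤ ∑ _i : Fin q, ‖R.B‖ * (q + p) * max (max ‖u‖ ‖z‖) ‖z'‖ ^ (q + p - 1) * ‖z - z'‖ := by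
        refine Finset.sum_le_sum fun i _ => ?_
        refine le_trans (R.B.norm_image_sub_le _ _) ?_
        rw [hcard, Nat.cast_add]
        have hm : max ‖Function.update (fun _ : Fin q ⊕ Fin p => z) (Sum.inl i) u‖
            ‖Function.update (fun _ : Fin q ⊕ Fin p => z') (Sum.inl i) u‖
            ≤ max (max ‖u‖ ‖z‖) ‖z'‖ := by
          apply max_le
          · exact le_trans (norm_update_le _ _ _) (le_max_left _ _)
          · refine le_trans (norm_update_le _ _ _) (max_le ?_ ?_)
            · exact le_trans (le_max_left _ _) (le_max_left _ _)
            · exact le_max_right _ _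
        apply mul_le_mul
        · apply mul_le_mul_of_nonneg_left
          · exact pow_le_pow_left₀ (le_trans (norm_nonneg _) (le_max_left _ _)) hm _
          · positivity
        · exact norm_update_sub_le _ _ _ _
        · exact norm_nonneg _
        · positivity
    _ = (q : ℝ) * (‖R.B‖ * (q + p) * max (max ‖u‖ ‖z‖) ‖z'‖ ^ (q + p - 1)) * ‖z - z'‖ := by
        rw [Finset.sum_const, Finset.card_univ, Fintype.card_fin, nsmul_eq_mul]; ring

theorem inner_grad_eq {G : Z → Z} (hG : IsGradBar f G) (u z : Z) :
    (inner ℂ u (G z) : ℂ) = R.Dzbar u z := by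
  rw [← hG z u, R.dzbarDir_eq]

include R in
theorem norm_grad_le {G : Z → Z} (hG : IsGradBar f G) (z : Z) :
    ‖G z‖ ≤ (q : ℝ) * ‖R.B‖ * ‖z‖ ^ (q + p - 1) := by
  classical
  have hcard : Fintype.card (Fin q ⊕ Fin p) = q + p := by simp
  have h1 : ‖G z‖ * ‖G z‖ ≤ ((q : ℝ) * ‖R.B‖ * ‖z‖ ^ (q + p - 1)) * ‖G z‖ := by
    have h2 : (‖G z‖ : ℝ) * ‖G z‖ = Complex.re (inner ℂ (G z) (G z) : ℂ) :=
      (inner_self_eq_norm_mul_norm (𝕜 := ℂ) (G z)).symm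
    rw [h2, R.inner_grad_eq hG]
    refine le_trans (Complex.re_le_norm _) ?_
    calc ‖R.Dzbar (G z) z‖ ≤ ∑ i : Fin q, ‖R.B (Function.update (fun _ => z) (Sum.inl i) (G z))‖ :=
          norm_sum_le _ _
      _ ≤ ∑ _i : Fin q, ‖R.B‖ * (‖G z‖ * ‖z‖ ^ (q + p - 1)) := by
          refine Finset.sum_le_sum fun i _ => ?_
          refine le_trans (R.B.le_opNorm _) ?_
          rw [prod_norm_update, hcard]
      _ = ((q : ℝ) * ‖R.B‖ * ‖z‖ ^ (q + p - 1)) * ‖G z‖ := by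
          rw [Finset.sum_const, Finset.card_univ, Fintype.card_fin, nsmul_eq_mul]; ring
  rcases eq_or_lt_of_le (norm_nonneg (G z)) with h0 | h0
  · rw [← h0]; positivity
  · exact le_of_mul_le_mul_right h1 h0

include R in
theorem continuous_grad {G : Z → Z} (hG : IsGradBar f G) : Continuous G := by
  rw [continuous_iff_continuousAt]
  intro z₀
  set C : ℝ := (q : ℝ) * ‖R.B‖ * (‖z₀‖ + 1) ^ (q + p - 1) with hC
  have hC0 : 0 ≤ C := by positivity
  have hGb : ∀ z : Z, ‖z - z₀‖ ≤ 1 → ‖G z‖ ≤ C := by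
    intro z hz
    refine le_trans (R.norm_grad_le hG z) ?_
    rw [hC]
    refine mul_le_mul_of_nonneg_left (pow_le_pow_left₀ (norm_nonneg z) ?_ _) (by positivity)
    calc ‖z‖ = ‖z₀ + (z - z₀)‖ := by rw [add_sub_cancel]
      _ ≤ ‖z₀‖ + ‖z - z₀‖ := norm_add_le _ _
      _ ≤ ‖z₀‖ + 1 := by linarith
  set A : ℝ := max (2 * C) (‖z₀‖ + 1) with hA
  set K : ℝ := (q : ℝ) * (‖R.B‖ * (q + p) * A ^ (q + p - 1)) with hK
  have hK0 : 0 ≤ K := by positivity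
  have key : ∀ z : Z, ‖z - z₀‖ ≤ 1 → ‖G z - G z₀‖ ≤ Real.sqrt (K * ‖z - z₀‖) := by
    intro z hz
    set u := G z - G z₀ with hu
    have h2 : (‖u‖ : ℝ) * ‖u‖ = Complex.re (inner ℂ u u : ℂ) :=
      (inner_self_eq_norm_mul_norm (𝕜 := ℂ) u).symm
    have h3 : (inner ℂ u u : ℂ) = R.Dzbar u z - R.Dzbar u z₀ := by
      rw [hu, inner_sub_right, R.inner_grad_eq hG, R.inner_grad_eq hG]
    have h4 : ‖u‖ * ‖u‖ ≤ K * ‖z - z₀‖ := by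
      rw [h2, h3]
      refine le_trans (Complex.re_le_norm _) ?_
      refine le_trans (R.Dzbar_sub_le u z z₀) ?_
      rw [hK]
      refine mul_le_mul_of_nonneg_right (mul_le_mul_of_nonneg_left
        (mul_le_mul_of_nonneg_left (pow_le_pow_left₀
          (le_trans (norm_nonneg u) (le_trans (le_max_left _ _) (le_max_left _ _))) ?_ _)
          (by positivity)) (by positivity)) (norm_nonneg _)
      apply max_le
      · apply max_le
        · calc ‖u‖ ≤ ‖G z‖ + ‖G z₀‖ := norm_sub_le _ _
            _ ≤ C + C := add_le_add (hGb z hz) (hGb z₀ (by simp))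
            _ = 2 * C := by ring
            _ ≤ A := le_max_left _ _
        · calc ‖z‖ = ‖z₀ + (z - z₀)‖ := by rw [add_sub_cancel]
            _ ≤ ‖z₀‖ + ‖z - z₀‖ := norm_add_le _ _
            _ ≤ ‖z₀‖ + 1 := by linarith
            _ ≤ A := le_max_right _ _
      · exact le_trans (by linarith [norm_nonneg z₀]) (le_max_right (2 * C) (‖z₀‖ + 1))
    calc ‖u‖ = Real.sqrt (‖u‖ * ‖u‖) := (Real.sqrt_mul_self (norm_nonneg u)).symm
      _ ≤ Real.sqrt (K * ‖z - z₀‖) := Real.sqrt_le_sqrt h4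
  rw [ContinuousAt, tendsto_iff_norm_sub_tendsto_zero]
  have hg0 : Tendsto (fun z : Z => Real.sqrt (K * ‖z - z₀‖)) (𝓝 z₀) (𝓝 0) := by
    have hcont : Continuous fun z : Z => Real.sqrt (K * ‖z - z₀‖) :=
      Real.continuous_sqrt.comp (continuous_const.mul ((continuous_id.sub continuous_const).norm))
    have := hcont.tendsto z₀
    simpa using this
  refine squeeze_zero' ?_ ?_ hg0
  · exact Eventually.of_forall fun z => norm_nonneg _
  · have hball : ∀ᶠ z : Z in 𝓝 z₀, ‖z - z₀‖ ≤ 1 := by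
      have := Metric.closedBall_mem_nhds z₀ one_pos
      filter_upwards [this] with z hz
      rw [Metric.mem_closedBall, dist_eq_norm] at hz
      exact hz
    filter_upwards [hball] with z hz using key z hz

end PQRep

namespace IsUnitaryGroup

variable {U : ℝ → Z → Z} (hU : IsUnitaryGroup U)

include hU

def clm (t : ℝ) : Z →L[ℂ] Z :=
  LinearMap.mkContinuous
    { toFun := U t, map_add' := hU.2.2.2.1 t, map_smul' := hU.2.2.2.2.1 t } 1
    fun x => by rw [show ‖({ toFun := U t, map_add' := hU.2.2.2.1 t, map_smul' := hU.2.2.2.2.1 t } : Z →ₗ[ℂ] Z) x‖ = ‖U t x‖ from rfl, hU.2.2.1 t x, one_mul]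

theorem clm_apply (t : ℝ) (x : Z) : hU.clm t x = U t x := rfl

def li (t : ℝ) : Z →ₗᵢ[ℂ] Z :=
  ⟨{ toFun := U t, map_add' := hU.2.2.2.1 t, map_smul' := hU.2.2.2.2.1 t }, hU.2.2.1 t⟩

theorem inner_map (t : ℝ) (x y : Z) : (inner ℂ (U t x) (U t y) : ℂ) = inner ℂ x y :=
  (hU.li t).inner_map_map x y

theorem group_apply (a b : ℝ) (x : Z) : U a (U b x) = U (a + b) x :=
  (congrFun (hU.2.1 a b) x).symm

theorem zero_apply (x : Z) : U 0 x = x := by rw [hU.1]; rfl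

end IsUnitaryGroup

/-- Duhamel formula along the Hartree flow: for every `b ∈ P_{p,q}(Z)`,
`b(F_t(z)) = b_t(z) + i ∫₀ᵗ {Q, b_{t−t₁}}(F_{t₁}(z)) dt₁`, where `b_τ = b ∘ U τ` and the
Poisson bracket is `{f,g} = ∂_z f·∂_{z̄} g − ∂_z g·∂_{z̄} f` (here written using the
antiholomorphic gradients: `∂_{z̄}(b∘U_τ)(w) = U(−τ)(G_b(U_τ w))` by unitarity). -/
theorem stmt2 {Z : Type*} [NormedAddCommGroup Z] [InnerProductSpace ℂ Z] [CompleteSpace Z]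
    (U : ℝ → Z → Z) (hU : IsUnitaryGroup U)
    (Q : Z → ℂ) (MQ : ℝ) (hQ : HasPQRep 2 2 Q MQ)
    (hQreal : ∀ z, (starRingEnd ℂ) (Q z) = Q z)
    (GQ : Z → Z) (hGQ : IsGradBar Q GQ)
    (p q : ℕ) (b : Z → ℂ) (Mb : ℝ) (hb : HasPQRep p q b Mb)
    (Gb : Z → Z) (hGb : IsGradBar b Gb)
    (F : ℝ → Z → Z) (hF : IsHartreeFlow U GQ F) :
    ∀ (t : ℝ) (z : Z),
      b (F t z) = b (U t z) + Complex.I *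
        ∫ t₁ in (0:ℝ)..t,
          (dzDir Q (U (-(t - t₁)) (Gb (U (t - t₁) (F t₁ z)))) (F t₁ z)
            - dzDir (fun w => b (U (t - t₁) w)) (GQ (F t₁ z)) (F t₁ z)) := by
  obtain ⟨RQ⟩ := hQ.toRep
  obtain ⟨Rb⟩ := hb.toRep
  obtain ⟨hFc, hFeq⟩ := hF
  have hQGcont : Continuous GQ := RQ.continuous_grad hGQ
  intro t z
  have hFz : Continuous fun s : ℝ => F s z := hFc.comp (continuous_id.prodMk continuous_const)
  set v : ℝ → Z := fun s => U (t - s) (GQ (F s z)) with hvdef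
  have hv : Continuous v :=
    hU.2.2.2.2.2.comp ((continuous_const.sub continuous_id).prodMk (hQGcont.comp hFz))
  set w : ℝ → Z := fun s => ∫ r in (0:ℝ)..s, v r with hwdef
  have hw : ∀ s, HasDerivAt w (v s) s := fun s => (hv.integral_hasStrictDerivAt 0 s).hasDerivAt
  have hwc : Continuous w := continuous_iff_continuousAt.2 fun s => (hw s).continuousAt
  set c : ℝ → Z := fun s => U t z - Complex.I • w s with hcdef
  have hcc : Continuous c := continuous_const.sub (hwc.const_smul Complex.I)
  have hc : ∀ t₁ : ℝ, U (t - t₁) (F t₁ z) = c t₁ := by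
    intro t₁
    have hint0 : Continuous fun s : ℝ => U (t₁ - s) (GQ (F s z)) :=
      hU.2.2.2.2.2.comp ((continuous_const.sub continuous_id).prodMk (hQGcont.comp hFz))
    have hInt : IntervalIntegrable (fun s : ℝ => U (t₁ - s) (GQ (F s z))) volume 0 t₁ :=
      hint0.intervalIntegrable 0 t₁
    rw [hFeq t₁ z]
    calc U (t - t₁) (U t₁ z - Complex.I • ∫ s in (0:ℝ)..t₁, U (t₁ - s) (GQ (F s z)))
        = hU.clm (t - t₁) (U t₁ z - Complex.I • ∫ s in (0:ℝ)..t₁, U (t₁ - s) (GQ (F s z))) := rfl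
      _ = hU.clm (t - t₁) (U t₁ z)
          - Complex.I • hU.clm (t - t₁) (∫ s in (0:ℝ)..t₁, U (t₁ - s) (GQ (F s z))) := by
          rw [map_sub, _root_.map_smul]
      _ = U t z - Complex.I • w t₁ := by
          congr 1
          · rw [hU.clm_apply, hU.group_apply, sub_add_cancel]
          · congr 1
            rw [← (hU.clm (t - t₁)).intervalIntegral_comp_comm hInt, hwdef]
            refine intervalIntegral.integral_congr fun s _ => ?_
            rw [hU.clm_apply, hU.group_apply]
            congr 1
            ring
  have hFtz : F t z = c t := by
    have h := hc t
    rwa [sub_self, hU.zero_apply] at h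
  have hF0 : F 0 z = z := by
    rw [hFeq 0 z, intervalIntegral.integral_same, smul_zero, sub_zero, hU.zero_apply]
  have hUtz : U t z = c 0 := by
    have h := hc 0
    rwa [sub_zero, hF0] at h
  have hGoal : ∀ t₁ : ℝ,
      dzDir Q (U (-(t - t₁)) (Gb (U (t - t₁) (F t₁ z)))) (F t₁ z)
        - dzDir (fun w' => b (U (t - t₁) w')) (GQ (F t₁ z)) (F t₁ z)
      = Rb.Dzbar (v t₁) (c t₁) - Rb.Dz (v t₁) (c t₁) := by
    intro t₁
    have h2 : dzDir (fun w' => b (U (t - t₁) w')) (GQ (F t₁ z)) (F t₁ z)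
        = Rb.Dz (v t₁) (c t₁) := by
      have hfun : (fun r : ℂ => b (U (t - t₁) (F t₁ z + r • GQ (F t₁ z))))
          = fun r : ℂ => b (U (t - t₁) (F t₁ z) + r • U (t - t₁) (GQ (F t₁ z))) := by
        funext r
        rw [hU.2.2.2.1, hU.2.2.2.2.1]
      have h3 : dzDir (fun w' => b (U (t - t₁) w')) (GQ (F t₁ z)) (F t₁ z)
          = dzDir b (U (t - t₁) (GQ (F t₁ z))) (U (t - t₁) (F t₁ z)) := by
        simp only [dzDir]
        exact congrArg wderivZ hfun
      rw [h3, Rb.dzDir_eq, hc t₁]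
    have h1 : dzDir Q (U (-(t - t₁)) (Gb (U (t - t₁) (F t₁ z)))) (F t₁ z)
        = Rb.Dzbar (v t₁) (c t₁) := by
      rw [RQ.dzDir_conj hQreal, hGQ (F t₁ z) _, inner_conj_symm]
      have hg : Gb (U (t - t₁) (F t₁ z))
          = U (t - t₁) (U (-(t - t₁)) (Gb (U (t - t₁) (F t₁ z)))) := by
        rw [hU.group_apply, add_neg_cancel, hU.zero_apply]
      have h4 : (inner ℂ (GQ (F t₁ z)) (U (-(t - t₁)) (Gb (U (t - t₁) (F t₁ z)))) : ℂ)
          = inner ℂ (U (t - t₁) (GQ (F t₁ z))) (Gb (U (t - t₁) (F t₁ z))) := by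
        conv_rhs => rw [hg]
        rw [hU.inner_map]
      rw [h4, hc t₁]
      exact Rb.inner_grad_eq hGb _ _
    rw [h1, h2]
  have hderiv : ∀ t₁ : ℝ, HasDerivAt (fun s => b (c s))
      (Complex.I * (Rb.Dzbar (v t₁) (c t₁) - Rb.Dz (v t₁) (c t₁))) t₁ := by
    intro t₁
    have hcd : HasDerivAt c (-(Complex.I • v t₁)) t₁ := by
      have h0 := (hasDerivAt_const t₁ (U t z)).sub ((hw t₁).const_smul Complex.I)
      rw [zero_sub] at h0; exact h0
    have h := Rb.hasDerivAt_comp hcd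
    have e : Rb.Dz (-(Complex.I • v t₁)) (c t₁) + Rb.Dzbar (-(Complex.I • v t₁)) (c t₁)
        = Complex.I * (Rb.Dzbar (v t₁) (c t₁) - Rb.Dz (v t₁) (c t₁)) := by
      rw [show -(Complex.I • v t₁) = (-Complex.I) • v t₁ from (neg_smul _ _).symm,
        Rb.Dz_smul, Rb.Dzbar_smul, map_neg, Complex.conj_I, neg_neg]
      ring
    rw [e] at h
    exact h
  have hDcont : Continuous fun t₁ =>
      Complex.I * (Rb.Dzbar (v t₁) (c t₁) - Rb.Dz (v t₁) (c t₁)) :=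
    continuous_const.mul ((Rb.continuous_Dzbar.comp (hv.prodMk hcc)).sub
      (Rb.continuous_Dz.comp (hv.prodMk hcc)))
  have hFTC := intervalIntegral.integral_eq_sub_of_hasDerivAt
      (f := fun s => b (c s)) (f' := fun t₁ => Complex.I * (Rb.Dzbar (v t₁) (c t₁)
        - Rb.Dz (v t₁) (c t₁))) (fun t₁ _ => hderiv t₁) (hDcont.intervalIntegrable 0 t)
  have hint : (∫ t₁ in (0:ℝ)..t,
        (dzDir Q (U (-(t - t₁)) (Gb (U (t - t₁) (F t₁ z)))) (F t₁ z)
          - dzDir (fun w' => b (U (t - t₁) w')) (GQ (F t₁ z)) (F t₁ z)))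
      = ∫ t₁ in (0:ℝ)..t, (Rb.Dzbar (v t₁) (c t₁) - Rb.Dz (v t₁) (c t₁)) :=
    intervalIntegral.integral_congr fun t₁ _ => hGoal t₁
  rw [hFtz, hUtz, hint, ← intervalIntegral.integral_const_mul, hFTC]
  ring
end
end

section
/- The Hartree-type flow F_t defined by z_t = e^{−itA}z − i∫₀ᵗ e^{−i(t−s)A} ∂_{z̄}Q(z_s) ds conserves the norm: |F_t(z)| = |z| for all t ∈ ℝ and z ∈ Z, provided Q̃ is symmetric (self-adjoint) on ⋁²Z. -/
open MeasureTheory Filter Topology Complex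

noncomputable section

variable {Z : Type*} [NormedAddCommGroup Z] [InnerProductSpace ℂ Z] [CompleteSpace Z]

private lemma upd_fin2_0 {α : Type*} (a b u : α) :
    Function.update ![a, b] (0 : Fin 2) u = ![u, b] := by
  funext i; fin_cases i <;> simp
private lemma upd_fin2_1 {α : Type*} (a b u : α) :
    Function.update ![a, b] (1 : Fin 2) u = ![a, u] := by
  funext i; fin_cases i <;> simp
private lemma const_fin2 {α : Type*} (a : α) : (fun _ : Fin 2 => a) = ![a, a] := by
  funext i; fin_cases i <;> simp

private lemma quartic_hasDerivAt (c0 c1 c2 c3 c4 : ℂ) :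
    HasDerivAt (fun w : ℂ => c0 + c1 * w + c2 * w ^ 2 + c3 * w ^ 3 + c4 * w ^ 4) c1 0 := by
  have h := ((((hasDerivAt_const (0:ℂ) c0).add ((hasDerivAt_id (0:ℂ)).const_mul c1)).add
      ((hasDerivAt_pow 2 (0:ℂ)).const_mul c2)).add
      ((hasDerivAt_pow 3 (0:ℂ)).const_mul c3)).add
      ((hasDerivAt_pow 4 (0:ℂ)).const_mul c4)
  exact h.congr_deriv (by simp)

private lemma wderivZbar_poly (c00 c10 c01 c11 c20 c02 c21 c12 c22 : ℂ) :
    (deriv (fun s : ℝ => (fun r : ℂ => c00 + (starRingEnd ℂ) r * c10 + r * c01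
        + (starRingEnd ℂ) r * r * c11 + ((starRingEnd ℂ) r) ^ 2 * c20 + r ^ 2 * c02
        + ((starRingEnd ℂ) r) ^ 2 * r * c21 + (starRingEnd ℂ) r * r ^ 2 * c12
        + ((starRingEnd ℂ) r) ^ 2 * r ^ 2 * c22) (s : ℂ)) 0
      + Complex.I * deriv (fun s : ℝ => (fun r : ℂ => c00 + (starRingEnd ℂ) r * c10 + r * c01
        + (starRingEnd ℂ) r * r * c11 + ((starRingEnd ℂ) r) ^ 2 * c20 + r ^ 2 * c02
        + ((starRingEnd ℂ) r) ^ 2 * r * c21 + (starRingEnd ℂ) r * r ^ 2 * c12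
        + ((starRingEnd ℂ) r) ^ 2 * r ^ 2 * c22) ((s : ℂ) * Complex.I)) 0) / 2 = c10 := by
  have e1 : HasDerivAt (fun w : ℂ => c00 + (c10 + c01) * w + (c11 + c20 + c02) * w ^ 2
      + (c21 + c12) * w ^ 3 + c22 * w ^ 4) (c10 + c01) ((0:ℝ):ℂ) := by
    simpa using quartic_hasDerivAt c00 (c10 + c01) (c11 + c20 + c02) (c21 + c12) c22
  have e2 : HasDerivAt (fun w : ℂ => c00 + (Complex.I * c01 - Complex.I * c10) * w
      + (c11 - c20 - c02) * w ^ 2 + (Complex.I * c12 - Complex.I * c21) * w ^ 3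
      + c22 * w ^ 4) (Complex.I * c01 - Complex.I * c10) ((0:ℝ):ℂ) := by
    simpa using quartic_hasDerivAt c00 (Complex.I * c01 - Complex.I * c10) (c11 - c20 - c02)
      (Complex.I * c12 - Complex.I * c21) c22
  have d1 : deriv (fun s : ℝ => (fun r : ℂ => c00 + (starRingEnd ℂ) r * c10 + r * c01
        + (starRingEnd ℂ) r * r * c11 + ((starRingEnd ℂ) r) ^ 2 * c20 + r ^ 2 * c02
        + ((starRingEnd ℂ) r) ^ 2 * r * c21 + (starRingEnd ℂ) r * r ^ 2 * c12
        + ((starRingEnd ℂ) r) ^ 2 * r ^ 2 * c22) (s : ℂ)) 0 = c10 + c01 := by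
    have heq : (fun s : ℝ => (fun r : ℂ => c00 + (starRingEnd ℂ) r * c10 + r * c01
        + (starRingEnd ℂ) r * r * c11 + ((starRingEnd ℂ) r) ^ 2 * c20 + r ^ 2 * c02
        + ((starRingEnd ℂ) r) ^ 2 * r * c21 + (starRingEnd ℂ) r * r ^ 2 * c12
        + ((starRingEnd ℂ) r) ^ 2 * r ^ 2 * c22) (s : ℂ))
        = fun s : ℝ => (fun w : ℂ => c00 + (c10 + c01) * w + (c11 + c20 + c02) * w ^ 2
          + (c21 + c12) * w ^ 3 + c22 * w ^ 4) ((s:ℝ):ℂ) := by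
      funext s
      simp only [Complex.conj_ofReal]
      ring
    rw [heq]
    exact e1.comp_ofReal.deriv
  have d2 : deriv (fun s : ℝ => (fun r : ℂ => c00 + (starRingEnd ℂ) r * c10 + r * c01
        + (starRingEnd ℂ) r * r * c11 + ((starRingEnd ℂ) r) ^ 2 * c20 + r ^ 2 * c02
        + ((starRingEnd ℂ) r) ^ 2 * r * c21 + (starRingEnd ℂ) r * r ^ 2 * c12
        + ((starRingEnd ℂ) r) ^ 2 * r ^ 2 * c22) ((s : ℂ) * Complex.I)) 0
      = Complex.I * c01 - Complex.I * c10 := by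
    have heq : (fun s : ℝ => (fun r : ℂ => c00 + (starRingEnd ℂ) r * c10 + r * c01
        + (starRingEnd ℂ) r * r * c11 + ((starRingEnd ℂ) r) ^ 2 * c20 + r ^ 2 * c02
        + ((starRingEnd ℂ) r) ^ 2 * r * c21 + (starRingEnd ℂ) r * r ^ 2 * c12
        + ((starRingEnd ℂ) r) ^ 2 * r ^ 2 * c22) ((s : ℂ) * Complex.I))
        = fun s : ℝ => (fun w : ℂ => c00 + (Complex.I * c01 - Complex.I * c10) * w
          + (c11 - c20 - c02) * w ^ 2 + (Complex.I * c12 - Complex.I * c21) * w ^ 3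
          + c22 * w ^ 4) ((s:ℝ):ℂ) := by
      funext s
      simp only [map_mul, Complex.conj_ofReal, Complex.conj_I]
      linear_combination ((s:ℂ)^2*(c20 + c02 - c11) + (s:ℂ)^3*Complex.I*(c21 - c12)
        + (s:ℂ)^4*c22*(Complex.I*Complex.I - 1)) * Complex.I_mul_I
    rw [heq]
    exact e2.comp_ofReal.deriv
  rw [d1, d2]
  linear_combination ((c01 - c10)/2) * Complex.I_mul_I

theorem stmt15 {Z : Type*} [NormedAddCommGroup Z] [InnerProductSpace ℂ Z] [CompleteSpace Z]
    (U : ℝ → Z → Z) (hU : IsUnitaryGroup U)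
    (Q : Z → ℂ) (MQ : ℝ) (hQ : HasPQRep 2 2 Q MQ)
    (hQreal : ∀ z, (starRingEnd ℂ) (Q z) = Q z)
    (G : Z → Z) (hG : IsGradBar Q G)
    (F : ℝ → Z → Z) (hF : IsHartreeFlow U G F) :
    ∀ (t : ℝ) (z : Z), ‖F t z‖ = ‖z‖ := by
  obtain ⟨hU0, hUgrp, hUnorm, hUadd, hUsmul, hUcont⟩ := hU
  obtain ⟨hFcont, hFeq⟩ := hF
  obtain ⟨β, ha1, hs1, ha2, hs2, hbd, hrep⟩ := hQ
  set B : Z → Z → Z → Z → ℂ := fun a b c d => β ![a, b] ![c, d] with hBdef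
  have b1a : ∀ a a' b c d, B (a + a') b c d = B a b c d + B a' b c d := by
    intro a a' b c d; simpa [hBdef, upd_fin2_0] using ha1 ![a, b] ![c, d] 0 a a'
  have b1s : ∀ (r : ℂ) a b c d, B (r • a) b c d = (starRingEnd ℂ) r * B a b c d := by
    intro r a b c d; simpa [hBdef, upd_fin2_0] using hs1 ![a, b] ![c, d] 0 r a
  have b2a : ∀ a b b' c d, B a (b + b') c d = B a b c d + B a b' c d := by
    intro a b b' c d; simpa [hBdef, upd_fin2_1] using ha1 ![a, b] ![c, d] 1 b b'
  have b2s : ∀ (r : ℂ) a b c d, B a (r • b) c d = (starRingEnd ℂ) r * B a b c d := by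
    intro r a b c d; simpa [hBdef, upd_fin2_1] using hs1 ![a, b] ![c, d] 1 r b
  have c1a : ∀ a b c c' d, B a b (c + c') d = B a b c d + B a b c' d := by
    intro a b c c' d; simpa [hBdef, upd_fin2_0] using ha2 ![a, b] ![c, d] 0 c c'
  have c1s : ∀ (r : ℂ) a b c d, B a b (r • c) d = r * B a b c d := by
    intro r a b c d; simpa [hBdef, upd_fin2_0] using hs2 ![a, b] ![c, d] 0 r c
  have c2a : ∀ a b c d d', B a b c (d + d') = B a b c d + B a b c d' := by
    intro a b c d d'; simpa [hBdef, upd_fin2_1] using ha2 ![a, b] ![c, d] 1 d d'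
  have c2s : ∀ (r : ℂ) a b c d, B a b c (r • d) = r * B a b c d := by
    intro r a b c d; simpa [hBdef, upd_fin2_1] using hs2 ![a, b] ![c, d] 1 r d
  have b2sub : ∀ a b b' c d, B a (b - b') c d = B a b c d - B a b' c d := by
    intro a b b' c d
    have h := b2a a (b - b') b' c d
    rw [sub_add_cancel] at h; linear_combination -h
  have c1sub : ∀ a b c c' d, B a b (c - c') d = B a b c d - B a b c' d := by
    intro a b c c' d
    have h := c1a a b (c - c') c' d
    rw [sub_add_cancel] at h; linear_combination -h
  have c2sub : ∀ a b c d d', B a b c (d - d') = B a b c d - B a b c d' := by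
    intro a b c d d'
    have h := c2a a b c (d - d') d'
    rw [sub_add_cancel] at h; linear_combination -h
  have b1sub : ∀ a a' b c d, B (a - a') b c d = B a b c d - B a' b c d := by
    intro a a' b c d
    have h := b1a (a - a') a' b c d
    rw [sub_add_cancel] at h; linear_combination -h
  have hQB : ∀ x : Z, Q x = B x x x x := by
    intro x; rw [hrep, const_fin2, hBdef]
  have hexp : ∀ (z u : Z) (r : ℂ), Q (z + r • u)
      = B z z z z + (starRingEnd ℂ) r * (B u z z z + B z u z z) + r * (B z z u z + B z z z u)
      + (starRingEnd ℂ) r * r * (B u z u z + B u z z u + B z u u z + B z u z u)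
      + ((starRingEnd ℂ) r) ^ 2 * (B u u z z) + r ^ 2 * (B z z u u)
      + ((starRingEnd ℂ) r) ^ 2 * r * (B u u u z + B u u z u)
      + (starRingEnd ℂ) r * r ^ 2 * (B u z u u + B z u u u)
      + ((starRingEnd ℂ) r) ^ 2 * r ^ 2 * (B u u u u) := by
    intro z u r
    rw [hQB (z + r • u)]
    simp only [b1a, b1s, b2a, b2s, c1a, c1s, c2a, c2s]
    ring
  have hGform : ∀ (u z : Z), (inner ℂ u (G z) : ℂ) = B u z z z + B z u z z := by
    intro u z
    rw [← hG z u]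
    unfold dzbarDir wderivZbar
    rw [show (fun r : ℂ => Q (z + r • u)) = (fun r : ℂ => B z z z z
        + (starRingEnd ℂ) r * (B u z z z + B z u z z) + r * (B z z u z + B z z z u)
        + (starRingEnd ℂ) r * r * (B u z u z + B u z z u + B z u u z + B z u z u)
        + ((starRingEnd ℂ) r) ^ 2 * (B u u z z) + r ^ 2 * (B z z u u)
        + ((starRingEnd ℂ) r) ^ 2 * r * (B u u u z + B u u z u)
        + (starRingEnd ℂ) r * r ^ 2 * (B u z u u + B z u u u)
        + ((starRingEnd ℂ) r) ^ 2 * r ^ 2 * (B u u u u)) from funext fun r => hexp z u r]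
    exact wderivZbar_poly _ _ _ _ _ _ _ _ _
  have hBbd : ∀ a b c d, ‖B a b c d‖ ≤ |MQ| * ‖a‖ * ‖b‖ * ‖c‖ * ‖d‖ := by
    intro a b c d
    have h2 : ‖B a b c d‖ ≤ MQ * (‖a‖ * ‖b‖) * (‖c‖ * ‖d‖) := by
      simpa [hBdef, Fin.prod_univ_two] using hbd ![a, b] ![c, d]
    have h4 : (0:ℝ) ≤ (‖a‖ * ‖b‖) := by positivity
    have h5 : (0:ℝ) ≤ (‖c‖ * ‖d‖) := by positivity
    have h3 : MQ * (‖a‖ * ‖b‖) * (‖c‖ * ‖d‖) ≤ |MQ| * (‖a‖ * ‖b‖) * (‖c‖ * ‖d‖) :=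
      mul_le_mul_of_nonneg_right (mul_le_mul_of_nonneg_right (le_abs_self MQ) h4) h5
    calc ‖B a b c d‖ ≤ MQ * (‖a‖ * ‖b‖) * (‖c‖ * ‖d‖) := h2
      _ ≤ |MQ| * (‖a‖ * ‖b‖) * (‖c‖ * ‖d‖) := h3
      _ = |MQ| * ‖a‖ * ‖b‖ * ‖c‖ * ‖d‖ := by ring
  -- local Lipschitz estimate for G
  have key : ∀ z w : Z, ‖G z - G w‖ ≤ 6 * |MQ| * (max ‖z‖ ‖w‖)^2 * ‖z - w‖ := by
    intro z w
    obtain ⟨u, hu⟩ : ∃ u, u = G z - G w := ⟨_, rfl⟩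
    set R := max ‖z‖ ‖w‖ with hR
    have hz : ‖z‖ ≤ R := le_max_left _ _
    have hw : ‖w‖ ≤ R := le_max_right _ _
    have hR0 : (0:ℝ) ≤ R := (norm_nonneg z).trans hz
    have hdiff : (inner ℂ u (G z) : ℂ) - inner ℂ u (G w) = (‖u‖ : ℂ)^2 := by
      rw [← inner_sub_right, ← hu]
      exact_mod_cast inner_self_eq_norm_sq_to_K (𝕜 := ℂ) u
    have t1 : B u (z - w) z z + B u w (z - w) z + B u w w (z - w)
        = B u z z z - B u w w w := by
      rw [b2sub, c1sub, c2sub]; ring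
    have t2 : B (z - w) u z z + B w u (z - w) z + B w u w (z - w)
        = B z u z z - B w u w w := by
      rw [b1sub, c1sub, c2sub]; ring
    have h2 : (‖u‖:ℂ)^2 = (B u (z - w) z z + B u w (z - w) z + B u w w (z - w))
        + (B (z - w) u z z + B w u (z - w) z + B w u w (z - w)) := by
      rw [t1, t2, ← hdiff, hGform u z, hGform u w]; ring
    have step : ∀ x y : ℝ, x ≤ R → y ≤ R → 0 ≤ x → 0 ≤ y →
        (|MQ| * ‖u‖ * ‖z - w‖) * (x * y) ≤ |MQ| * ‖u‖ * R * R * ‖z - w‖ := by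
      intro x y hx hy hx0 hy0
      calc (|MQ| * ‖u‖ * ‖z - w‖) * (x * y)
          ≤ (|MQ| * ‖u‖ * ‖z - w‖) * (R * R) :=
            mul_le_mul_of_nonneg_left (mul_le_mul hx hy hy0 hR0) (by positivity)
        _ = |MQ| * ‖u‖ * R * R * ‖z - w‖ := by ring
    have n1 : ‖B u (z - w) z z‖ ≤ |MQ| * ‖u‖ * R * R * ‖z - w‖ := by
      refine (hBbd _ _ _ _).trans ?_
      calc |MQ| * ‖u‖ * ‖z - w‖ * ‖z‖ * ‖z‖
          = (|MQ| * ‖u‖ * ‖z - w‖) * (‖z‖ * ‖z‖) := by ring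
        _ ≤ _ := step _ _ hz hz (norm_nonneg _) (norm_nonneg _)
    have n2 : ‖B u w (z - w) z‖ ≤ |MQ| * ‖u‖ * R * R * ‖z - w‖ := by
      refine (hBbd _ _ _ _).trans ?_
      calc |MQ| * ‖u‖ * ‖w‖ * ‖z - w‖ * ‖z‖
          = (|MQ| * ‖u‖ * ‖z - w‖) * (‖w‖ * ‖z‖) := by ring
        _ ≤ _ := step _ _ hw hz (norm_nonneg _) (norm_nonneg _)
    have n3 : ‖B u w w (z - w)‖ ≤ |MQ| * ‖u‖ * R * R * ‖z - w‖ := by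
      refine (hBbd _ _ _ _).trans ?_
      calc |MQ| * ‖u‖ * ‖w‖ * ‖w‖ * ‖z - w‖
          = (|MQ| * ‖u‖ * ‖z - w‖) * (‖w‖ * ‖w‖) := by ring
        _ ≤ _ := step _ _ hw hw (norm_nonneg _) (norm_nonneg _)
    have n4 : ‖B (z - w) u z z‖ ≤ |MQ| * ‖u‖ * R * R * ‖z - w‖ := by
      refine (hBbd _ _ _ _).trans ?_
      calc |MQ| * ‖z - w‖ * ‖u‖ * ‖z‖ * ‖z‖
          = (|MQ| * ‖u‖ * ‖z - w‖) * (‖z‖ * ‖z‖) := by ring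
        _ ≤ _ := step _ _ hz hz (norm_nonneg _) (norm_nonneg _)
    have n5 : ‖B w u (z - w) z‖ ≤ |MQ| * ‖u‖ * R * R * ‖z - w‖ := by
      refine (hBbd _ _ _ _).trans ?_
      calc |MQ| * ‖w‖ * ‖u‖ * ‖z - w‖ * ‖z‖
          = (|MQ| * ‖u‖ * ‖z - w‖) * (‖w‖ * ‖z‖) := by ring
        _ ≤ _ := step _ _ hw hz (norm_nonneg _) (norm_nonneg _)
    have n6 : ‖B w u w (z - w)‖ ≤ |MQ| * ‖u‖ * R * R * ‖z - w‖ := by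
      refine (hBbd _ _ _ _).trans ?_
      calc |MQ| * ‖w‖ * ‖u‖ * ‖w‖ * ‖z - w‖
          = (|MQ| * ‖u‖ * ‖z - w‖) * (‖w‖ * ‖w‖) := by ring
        _ ≤ _ := step _ _ hw hw (norm_nonneg _) (norm_nonneg _)
    have hnorm6 : ‖u‖^2 ≤ 6 * (|MQ| * ‖u‖ * R * R * ‖z - w‖) := by
      calc ‖u‖^2 = ‖((‖u‖ : ℂ))^2‖ := by
            rw [norm_pow, Complex.norm_real, norm_norm]
        _ = ‖(B u (z - w) z z + B u w (z - w) z + B u w w (z - w))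
            + (B (z - w) u z z + B w u (z - w) z + B w u w (z - w))‖ := by rw [h2]
        _ ≤ ‖B u (z - w) z z + B u w (z - w) z + B u w w (z - w)‖
            + ‖B (z - w) u z z + B w u (z - w) z + B w u w (z - w)‖ := norm_add_le _ _
        _ ≤ (‖B u (z - w) z z‖ + ‖B u w (z - w) z‖ + ‖B u w w (z - w)‖)
            + (‖B (z - w) u z z‖ + ‖B w u (z - w) z‖ + ‖B w u w (z - w)‖) :=
              add_le_add (norm_add₃_le) (norm_add₃_le)
        _ ≤ 6 * (|MQ| * ‖u‖ * R * R * ‖z - w‖) := by linarith [n1, n2, n3, n4, n5, n6]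
    rw [← hu]
    by_cases h0 : ‖u‖ = 0
    · rw [h0]; positivity
    · have hup : 0 < ‖u‖ := lt_of_le_of_ne (norm_nonneg _) (Ne.symm h0)
      nlinarith [hnorm6, hup]
  -- continuity of G
  have hGcont : Continuous G := by
    rw [continuous_iff_continuousAt]
    intro z
    rw [ContinuousAt, tendsto_iff_norm_sub_tendsto_zero]
    have hb : Filter.Tendsto (fun w : Z => 6 * |MQ| * (max ‖w‖ ‖z‖)^2 * ‖w - z‖) (nhds z)
        (nhds (6 * |MQ| * (max ‖z‖ ‖z‖)^2 * ‖z - z‖)) := by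
      apply Continuous.tendsto
      exact (continuous_const.mul ((continuous_norm.max continuous_const).pow 2)).mul
        ((continuous_id.sub continuous_const).norm)
    simp only [sub_self, norm_zero, mul_zero] at hb
    exact squeeze_zero (fun w => norm_nonneg _) (fun w => key w z) hb
  -- unitarity facts
  have hUsub : ∀ (t : ℝ) (a b : Z), U t (a - b) = U t a - U t b := by
    intro t a b
    have h := hUadd t a ((-1 : ℂ) • b)
    rw [hUsmul t] at h
    calc U t (a - b) = U t (a + (-1:ℂ) • b) := by rw [neg_one_smul, ← sub_eq_add_neg]
      _ = U t a + (-1:ℂ) • U t b := h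
      _ = U t a - U t b := by rw [neg_one_smul, ← sub_eq_add_neg]
  have hUinner : ∀ (t : ℝ) (x y : Z), (inner ℂ (U t x) (U t y) : ℂ) = inner ℂ x y := by
    intro t x y
    exact LinearIsometry.inner_map_map
      ⟨{ toFun := U t, map_add' := hUadd t, map_smul' := hUsmul t }, hUnorm t⟩ x y
  have hUinv : ∀ (t : ℝ) (x : Z), U (-t) (U t x) = x := by
    intro t x
    have h := hUgrp (-t) t
    rw [show -t + t = 0 by ring, hU0] at h
    exact congrFun h.symm x
  have hUshift : ∀ (t s : ℝ) (x : Z), U (-t) (U (t - s) x) = U (-s) x := by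
    intro t s x
    have h := hUgrp (-t) (t - s)
    rw [show -t + (t - s) = -s by ring] at h
    exact (congrFun h x).symm
  intro t₀ z
  set g : ℝ → Z := fun s => U (-s) (G (F s z)) with hgdef
  have hFz : Continuous fun s : ℝ => F s z :=
    hFcont.comp (continuous_id.prodMk continuous_const)
  have hgc : Continuous g :=
    hUcont.comp (continuous_neg.prodMk (hGcont.comp hFz))
  set w : ℝ → Z := fun t => z - Complex.I • ∫ s in (0:ℝ)..t, g s with hwdef
  have hw : ∀ t : ℝ, U (-t) (F t z) = w t := by
    intro t
    have hic : Continuous fun s : ℝ => U (t - s) (G (F s z)) :=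
      hUcont.comp ((continuous_const.sub continuous_id).prodMk (hGcont.comp hFz))
    have hint : IntervalIntegrable (fun s => U (t - s) (G (F s z))) MeasureTheory.volume 0 t :=
      hic.intervalIntegrable 0 t
    have hcomm : U (-t) (∫ s in (0:ℝ)..t, U (t - s) (G (F s z))) = ∫ s in (0:ℝ)..t, g s := by
      let Lc : Z →L[ℂ] Z := LinearIsometry.toContinuousLinearMap
        ⟨{ toFun := U (-t), map_add' := hUadd (-t), map_smul' := hUsmul (-t) }, hUnorm (-t)⟩
      have hLeq : ∀ x, Lc x = U (-t) x := fun x => rfl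
      calc U (-t) (∫ s in (0:ℝ)..t, U (t - s) (G (F s z)))
          = Lc (∫ s in (0:ℝ)..t, U (t - s) (G (F s z))) := rfl
        _ = ∫ s in (0:ℝ)..t, Lc (U (t - s) (G (F s z))) :=
            (Lc.intervalIntegral_comp_comm hint).symm
        _ = ∫ s in (0:ℝ)..t, g s := by
            refine intervalIntegral.integral_congr fun s _ => ?_
            show U (-t) (U (t - s) (G (F s z))) = g s
            rw [hUshift]
    rw [hFeq t z, hUsub, hUsmul, hUinv t z, hcomm]
  have hderivw : ∀ t : ℝ, HasDerivAt w (-(Complex.I • g t)) t := by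
    intro t
    have hInt : HasDerivAt (fun τ => ∫ s in (0:ℝ)..τ, g s) (g t) t :=
      (hgc.integral_hasStrictDerivAt 0 t).hasDerivAt
    have h := (hasDerivAt_const t z).sub (hInt.const_smul Complex.I)
    exact h.congr_deriv (by simp)
  have hNder : ∀ t : ℝ, HasDerivAt (fun τ => Complex.re (inner ℂ (w τ) (w τ) : ℂ)) 0 t := by
    intro t
    have h1 := hderivw t
    have h2 := HasDerivAt.inner ℂ h1 h1
    have h3 := Complex.reCLM.hasFDerivAt.comp_hasDerivAt t h2
    have hq : (inner ℂ (w t) (g t) : ℂ) = 2 * Q (F t z) := by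
      rw [← hw t, hgdef]
      show (inner ℂ (U (-t) (F t z)) (U (-t) (G (F t z))) : ℂ) = 2 * Q (F t z)
      rw [hUinner, hGform (F t z) (F t z), hQB (F t z)]; ring
    have hcg : (inner ℂ (g t) (w t) : ℂ) = (starRingEnd ℂ) (2 * Q (F t z)) := by
      rw [← inner_conj_symm, hq]
    have hqr : (starRingEnd ℂ) ((2:ℂ) * Q (F t z)) = 2 * Q (F t z) := by
      rw [map_mul, hQreal, map_ofNat]
    have h5 : (inner ℂ (w t) (-(Complex.I • g t)) : ℂ) + inner ℂ (-(Complex.I • g t)) (w t)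
        = 0 := by
      rw [inner_neg_right, inner_neg_left, inner_smul_right, inner_smul_left, hq, hcg, hqr,
        Complex.conj_I]
      ring
    have h4 : HasDerivAt (fun τ => Complex.re (inner ℂ (w τ) (w τ) : ℂ))
        (Complex.re ((inner ℂ (w t) (-(Complex.I • g t)) : ℂ)
          + inner ℂ (-(Complex.I • g t)) (w t))) t := h3
    rw [h5] at h4
    simpa using h4
  have hdiffN : Differentiable ℝ (fun τ => Complex.re (inner ℂ (w τ) (w τ) : ℂ)) :=
    fun τ => (hNder τ).differentiableAt
  have hconst :
      Complex.re (inner ℂ (w t₀) (w t₀) : ℂ) = Complex.re (inner ℂ (w 0) (w 0) : ℂ) :=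
    is_const_of_deriv_eq_zero hdiffN (fun τ => (hNder τ).deriv) t₀ 0
  have hw0 : w 0 = z := by
    rw [hwdef]; simp
  have hre : ∀ x : Z, Complex.re (inner ℂ x x : ℂ) = ‖x‖^2 := by
    intro x
    have hxx : (inner ℂ x x : ℂ) = ((‖x‖ : ℝ) : ℂ)^2 := by
      exact_mod_cast inner_self_eq_norm_sq_to_K (𝕜 := ℂ) x
    rw [hxx, ← Complex.ofReal_pow, Complex.ofReal_re]
  have hnormsq : ‖w t₀‖^2 = ‖z‖^2 := by
    have h := hconst
    rw [hre, hre, hw0] at h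
    exact h
  have hn1 : ‖F t₀ z‖ = ‖w t₀‖ := by rw [← hw t₀, hUnorm]
  have h := congrArg Real.sqrt hnormsq
  rwa [Real.sqrt_sq (norm_nonneg _), Real.sqrt_sq (norm_nonneg _), ← hn1] at h
end
end

section
/- Suppose the sequence (ρ_n) of density matrices satisfies the equicontinuity hypothesis (E): for all p, q ∈ ℕ and η > 0 there is a σ-weak neighborhood W₀ of 0 in L(⋁ᵖZ, ⋁ᵠZ) such that |Tr[ρ_n b^{Wick}]| < η for all b̃ ∈ W₀ and all n. Suppose also Tr[ρ_n b^{Wick}] → ∫ b dμ for all b with compact kernel. Then Tr[ρ_n b^{Wick}] → ∫_Z b dμ for ALL b ∈ P_{p,q}(Z) with bounded kernel (property (P)), provided for each bounded b̃ there exist compact b̃_κ with b̃_κ → b̃ σ-weakly and sup_κ ‖b̃_κ‖ ≤ ‖b̃‖, and ∫|z|^{p+q}dμ < ∞. -/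
open MeasureTheory Filter Topology

noncomputable section

/-- Equicontinuity (E) implies property (P).  Here `Hp`, `Hq` stand
for the symmetric tensor powers `⋁ᵖZ`, `⋁ᵠZ`, `ψp z`, `ψq z` for `z^{⊗p}`, `z^{⊗q}`
(so `‖ψp z‖ ≤ ‖z‖ᵖ`), `L n c = Tr[ρ_n b^{Wick}]` is the Wick expectation as a linear
functional of the kernel `c`, and `∫ ⟨ψq z, c (ψp z)⟩ dμ = ∫ b dμ`.  Hypotheses: the
σ-weak (weak-operator) equicontinuity (E), convergence on compact kernels, σ-weak
approximation of `b̃` by compacts `c_κ` with `‖c_κ‖ ≤ ‖b̃‖`, and `∫ |z|^{p+q} dμ < ∞`.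
Conclusion: `Tr[ρ_n b^{Wick}] → ∫ b dμ` for the bounded kernel `b̃`. -/
theorem stmt16 {Z Hp Hq : Type*}
    [NormedAddCommGroup Z] [InnerProductSpace ℂ Z] [CompleteSpace Z]
    [NormedAddCommGroup Hp] [InnerProductSpace ℂ Hp] [CompleteSpace Hp]
    [NormedAddCommGroup Hq] [InnerProductSpace ℂ Hq] [CompleteSpace Hq]
    [MeasurableSpace Z] [BorelSpace Z]
    (μ : Measure Z) [IsProbabilityMeasure μ]
    (p q : ℕ) (ψp : Z → Hp) (ψq : Z → Hq)
    (hψp : ∀ z, ‖ψp z‖ ≤ ‖z‖ ^ p) (hψq : ∀ z, ‖ψq z‖ ≤ ‖z‖ ^ q)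
    (hmeasp : Continuous ψp) (hmeasq : Continuous ψq)
    (hmom : Integrable (fun z => ‖z‖ ^ (p + q)) μ)
    (L : ℕ → (Hp →L[ℂ] Hq) → ℂ) (hL : ∀ n, IsLinearMap ℂ (L n))
    (hE : ∀ η : ℝ, 0 < η → ∃ (k : ℕ) (x : Fin k → Hp) (y : Fin k → Hq) (δ : ℝ), 0 < δ ∧
      ∀ c : Hp →L[ℂ] Hq, (∀ i, ‖(inner ℂ (y i) (c (x i)) : ℂ)‖ < δ) → ∀ n, ‖L n c‖ < η)
    (hcpt : ∀ c : Hp →L[ℂ] Hq, IsCompactOperator c →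
      Tendsto (fun n => L n c) atTop (𝓝 (∫ z, (inner ℂ (ψq z) (c (ψp z)) : ℂ) ∂μ)))
    (btil : Hp →L[ℂ] Hq)
    (happrox : ∃ cκ : ℕ → (Hp →L[ℂ] Hq), (∀ k, IsCompactOperator (cκ k)) ∧
      (∀ k, ‖cκ k‖ ≤ ‖btil‖) ∧
      ∀ (x : Hp) (y : Hq),
        Tendsto (fun k => (inner ℂ y ((cκ k) x) : ℂ)) atTop (𝓝 (inner ℂ y (btil x)))) :
    Tendsto (fun n => L n btil) atTop
      (𝓝 (∫ z, (inner ℂ (ψq z) (btil (ψp z)) : ℂ) ∂μ)) := by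

  obtain ⟨cκ, hκcpt, hκbd, hκw⟩ := happrox
  set I := fun c : Hp →L[ℂ] Hq => ∫ z, (inner ℂ (ψq z) (c (ψp z)) : ℂ) ∂μ with hI
  have hbound : ∀ (c : Hp →L[ℂ] Hq) (z : Z),
      ‖(inner ℂ (ψq z) (c (ψp z)) : ℂ)‖ ≤ ‖c‖ * ‖z‖ ^ (p + q) := by
    intro c z
    calc ‖(inner ℂ (ψq z) (c (ψp z)) : ℂ)‖ ≤ ‖ψq z‖ * ‖c (ψp z)‖ := norm_inner_le_norm _ _
      _ ≤ ‖z‖ ^ q * (‖c‖ * ‖z‖ ^ p) :=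
          mul_le_mul (hψq z)
            ((c.le_opNorm _).trans (mul_le_mul_of_nonneg_left (hψp z) (norm_nonneg c)))
            (norm_nonneg _) (pow_nonneg (norm_nonneg z) q)
      _ = ‖c‖ * ‖z‖ ^ (p + q) := by rw [pow_add]; ring
  have hIconv : Tendsto (fun m => I (cκ m)) atTop (𝓝 (I btil)) := by
    refine tendsto_integral_of_dominated_convergence (fun z => ‖btil‖ * ‖z‖ ^ (p + q))
      (fun m => ?_) (hmom.const_mul _) (fun m => ?_) ?_
    · exact (Continuous.inner hmeasq ((cκ m).continuous.comp hmeasp)).aestronglyMeasurable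
    · filter_upwards with z
      exact (hbound (cκ m) z).trans (mul_le_mul_of_nonneg_right (hκbd m) (pow_nonneg (norm_nonneg z) _))
    · filter_upwards with z
      exact hκw (ψp z) (ψq z)
  rw [Metric.tendsto_atTop]
  intro ε hε
  obtain ⟨k, x, y, δ, hδ, hEδ⟩ := hE (ε / 3) (by positivity)
  have h1 : ∀ᶠ m in atTop, ∀ i : Fin k,
      ‖(inner ℂ (y i) ((btil - cκ m) (x i)) : ℂ)‖ < δ := by
    rw [eventually_all]
    intro i
    have := (hκw (x i) (y i)).const_sub (inner ℂ (y i) (btil (x i)) : ℂ)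
    have h0 : Tendsto (fun m => ‖(inner ℂ (y i) ((btil - cκ m) (x i)) : ℂ)‖) atTop (𝓝 0) := by
      simpa [ContinuousLinearMap.sub_apply, inner_sub_right] using this.norm
    exact h0.eventually (eventually_lt_nhds hδ)
  have h2 : ∀ᶠ m in atTop, dist (I (cκ m)) (I btil) < ε / 3 :=
    hIconv.eventually (Metric.ball_mem_nhds _ (by positivity))
  obtain ⟨m, hm1, hm2⟩ := (h1.and h2).exists
  have h3 : ∀ᶠ n in atTop, dist (L n (cκ m)) (I (cκ m)) < ε / 3 :=
    (hcpt (cκ m) (hκcpt m)).eventually (Metric.ball_mem_nhds _ (by positivity))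
  obtain ⟨N, hN⟩ := eventually_atTop.1 h3
  refine ⟨N, fun n hn => ?_⟩
  have hsub : L n btil - L n (cκ m) = L n (btil - cκ m) := ((hL n).map_sub _ _).symm
  have hterm1 : ‖L n btil - L n (cκ m)‖ < ε / 3 := by
    rw [hsub]; exact hEδ _ hm1 n
  calc dist (L n btil) (I btil)
      ≤ dist (L n btil) (L n (cκ m)) + dist (L n (cκ m)) (I (cκ m))
        + dist (I (cκ m)) (I btil) := dist_triangle4 _ _ _ _
    _ < ε / 3 + ε / 3 + ε / 3 := by
        refine add_lt_add (add_lt_add ?_ (hN n hn)) hm2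
        rw [dist_eq_norm]; exact hterm1
    _ = ε := by ring
end
end
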